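/- If G is a very well-covered graph that has two disjoint maximum independent sets, then G is a bipartite graph with a perfect matching. -/

import Mathlib

open SimpleGraph

variable {V : Type*} [Fintype V] [DecidableEq V]

/-- A set of vertices is independent: no two of its vertices are adjacent. -/
def isIndep (G : SimpleGraph V) (S : Finset V) : Prop :=
  ∀ ⦃a⦄, a ∈ S → ∀ ⦃b⦄, b ∈ S → ¬ G.Adj a b

/-- The independence number `α(G)`. -/
noncomputable def indepNumF (G : SimpleGraph V) : ℕ :=
  sSup {n | ∃ S : Finset V, isIndep G S ∧ S.card = n}

/-- A maximum independent set: an independent set of size `α(G)`. -/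
def isMaxIndep (G : SimpleGraph V) (S : Finset V) : Prop :=
  isIndep G S ∧ S.card = indepNumF G

/-- `G` has two disjoint maximum independent sets. -/
def hasTwoDisjointMaxIndep (G : SimpleGraph V) : Prop :=
  ∃ S₁ S₂ : Finset V, isMaxIndep G S₁ ∧ isMaxIndep G S₂ ∧ Disjoint S₁ S₂

/-- A matching: a set of edges of `G`, pairwise sharing no vertex. -/
def isMatchingF (G : SimpleGraph V) (M : Finset (Sym2 V)) : Prop :=
  (∀ e ∈ M, e ∈ G.edgeSet) ∧
  (∀ e ∈ M, ∀ f ∈ M, e ≠ f → ∀ v : V, v ∈ e → v ∉ f)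

/-- The matching number `μ(G)`. -/
noncomputable def matchNum (G : SimpleGraph V) : ℕ :=
  sSup {n | ∃ M : Finset (Sym2 V), isMatchingF G M ∧ M.card = n}

/-- A shedding vertex: for every independent set `S` of `G − N[v]` there is a
neighbor `u` of `v` with `S ∪ {u}` independent. -/
def IsShedding (G : SimpleGraph V) (v : V) : Prop :=
  ∀ S : Finset V, isIndep G S → (∀ w ∈ S, w ≠ v ∧ ¬ G.Adj v w) →
    ∃ u, G.Adj v u ∧ isIndep G (insert u S)

/-- A perfect matching of `G`: a matching covering every vertex. -/
def hasPerfectMatchingF (G : SimpleGraph V) : Prop :=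
  ∃ M : Finset (Sym2 V), isMatchingF G M ∧ ∀ v : V, ∃ e ∈ M, v ∈ e

/-- The disjoint union of `k` copies of `K₂`. -/
def copiesK2 (k : ℕ) : SimpleGraph (Fin k × Fin 2) :=
  SimpleGraph.fromRel (fun p q => p.1 = q.1)

/-! If `S₁`, `S₂` are disjoint maximum independent sets and `|V| = 2α(G)`, they partition the
vertex set, so `G` is bipartite with sides `S₁` and `S₂`. For `A ⊆ S₁` with neighbourhood `N` in
`S₂`, the set `(S₂ \ N) ∪ A` is independent, so `|S₂| - |N| + |A| ≤ α(G) = |S₂|`, i.e. `|A| ≤ |N|`.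
Hall's theorem then matches `S₁` into `S₂`, and since `|S₁| = |S₂|` this matching is perfect. -/

open Finset

omit [DecidableEq V] in
lemma isIndep.card_le_indepNumF {G : SimpleGraph V} {S : Finset V} (hS : isIndep G S) :
    #S ≤ indepNumF G :=
  le_csSup ⟨Fintype.card V, fun _ ⟨T, _, hT⟩ => hT ▸ T.card_le_univ⟩ ⟨S, hS, rfl⟩

omit [Fintype V] [DecidableEq V] in
lemma isBipartiteWith_of_isIndep {G : SimpleGraph V} {S₁ S₂ : Finset V}
    (h₁ : isIndep G S₁) (h₂ : isIndep G S₂) (hdisj : Disjoint S₁ S₂)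
    (hcover : ∀ v, v ∈ S₁ ∨ v ∈ S₂) : G.IsBipartiteWith S₁ S₂ where
  disjoint := disjoint_coe.mpr hdisj
  mem_of_adj v w hvw := by
    rcases hcover v with hv | hv <;> rcases hcover w with hw | hw
    · exact (h₁ hv hw hvw).elim
    · exact .inl ⟨hv, hw⟩
    · exact .inr ⟨hv, hw⟩
    · exact (h₂ hv hw hvw).elim

lemma card_le_card_of_isMaxIndep {G : SimpleGraph V} {S₁ S₂ A N : Finset V}
    (h₁ : isIndep G S₁) (h₂ : isMaxIndep G S₂) (hdisj : Disjoint S₁ S₂)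
    (hA : A ⊆ S₁) (hN : N ⊆ S₂) (hnbr : ∀ a ∈ A, ∀ b ∈ S₂, G.Adj a b → b ∈ N) :
    #A ≤ #N := by
  have hindep : isIndep G ((S₂ \ N) ∪ A) := by
    intro a ha b hb hab
    rcases mem_union.mp ha with ha | ha <;> rcases mem_union.mp hb with hb | hb
    · exact h₂.1 (mem_sdiff.mp ha).1 (mem_sdiff.mp hb).1 hab
    · exact (mem_sdiff.mp ha).2 (hnbr b hb a (mem_sdiff.mp ha).1 hab.symm)
    · exact (mem_sdiff.mp hb).2 (hnbr a ha b (mem_sdiff.mp hb).1 hab)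
    · exact h₁ (hA ha) (hA hb) hab
  have hcard : #((S₂ \ N) ∪ A) = #S₂ - #N + #A := by
    rw [card_union_of_disjoint ((hdisj.mono_left hA).symm.mono_left sdiff_subset),
      card_sdiff_of_subset hN]
  have := hindep.card_le_indepNumF
  have := h₂.2
  have := card_le_card hN
  omega

lemma exists_injective_adj_of_isMaxIndep {G : SimpleGraph V} {S₁ S₂ : Finset V}
    (h₁ : isIndep G S₁) (h₂ : isMaxIndep G S₂) (hdisj : Disjoint S₁ S₂) :
    ∃ f : S₁ → V, Function.Injective f ∧ (∀ v, f v ∈ S₂) ∧ ∀ v : S₁, G.Adj v (f v) := by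
  classical
  let nbrs : S₁ → Finset V := fun v => S₂.filter (G.Adj v)
  have hall : ∀ A : Finset S₁, #A ≤ #(A.biUnion nbrs) := fun A => by
    rw [← card_image_of_injective A Subtype.val_injective]
    refine card_le_card_of_isMaxIndep h₁ h₂ hdisj (image_subset_iff.mpr fun v _ => v.2)
      (biUnion_subset.mpr fun v _ => filter_subset _ _) ?_
    simp only [mem_image, mem_biUnion, mem_filter, nbrs]
    rintro _ ⟨v, hv, rfl⟩ b hb hab
    exact ⟨v, hv, hb, hab⟩
  obtain ⟨f, hf, hfnbrs⟩ := (all_card_le_biUnion_card_iff_exists_injective nbrs).mp hall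
  exact ⟨f, hf, fun v => (mem_filter.mp (hfnbrs v)).1, fun v => (mem_filter.mp (hfnbrs v)).2⟩

omit [Fintype V] in
lemma hasPerfectMatchingF_of_injective {G : SimpleGraph V} {S : Finset V} (f : S → V)
    (hf : Function.Injective f) (hadj : ∀ v : S, G.Adj v (f v)) (hout : ∀ v, f v ∉ S)
    (hcover : ∀ x, x ∈ S ∨ x ∈ Set.range f) : hasPerfectMatchingF G := by
  refine ⟨univ.image fun v : S => s(v.1, f v), ⟨?_, ?_⟩, fun x => ?_⟩
  · simp only [mem_image, mem_univ, true_and, forall_exists_index]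
    rintro _ v rfl
    exact G.mem_edgeSet.mpr (hadj v)
  · simp only [mem_image, mem_univ, true_and]
    rintro _ ⟨v, rfl⟩ _ ⟨w, rfl⟩ hne x hx hx'
    rcases Sym2.mem_iff.mp hx with rfl | rfl <;> rcases Sym2.mem_iff.mp hx' with h | h
    · exact hne (by rw [Subtype.ext h])
    · exact hout w (h ▸ v.2)
    · exact hout v (h ▸ w.2)
    · exact hne (by rw [hf h])
  · rcases hcover x with hx | ⟨v, rfl⟩
    · exact ⟨_, mem_image_of_mem _ (mem_univ ⟨x, hx⟩), Sym2.mem_mk_left _ _⟩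
    · exact ⟨_, mem_image_of_mem _ (mem_univ v), Sym2.mem_mk_right _ _⟩

theorem stmt12_general (G : SimpleGraph V)
    (hvwc : Fintype.card V = 2 * indepNumF G)
    (h : hasTwoDisjointMaxIndep G) :
    G.Colorable 2 ∧ hasPerfectMatchingF G := by
  obtain ⟨S₁, S₂, h₁, h₂, hdisj⟩ := h
  have hcover : ∀ v, v ∈ S₁ ∨ v ∈ S₂ := fun v => mem_union.mp <| by
    rw [eq_univ_of_card (S₁ ∪ S₂) (by rw [card_union_of_disjoint hdisj, h₁.2, h₂.2, hvwc, two_mul])]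
    exact mem_univ v
  refine ⟨(isBipartiteWith_of_isIndep h₁.1 h₂.1 hdisj hcover).isBipartite, ?_⟩
  obtain ⟨f, hf, hfS₂, hfadj⟩ := exists_injective_adj_of_isMaxIndep h₁.1 h₂ hdisj
  have hrange : univ.image f = S₂ :=
    eq_of_subset_of_card_le (image_subset_iff.mpr fun v _ => hfS₂ v) <| by
      rw [card_image_of_injective _ hf, card_univ, Fintype.card_coe, h₁.2, h₂.2]
  refine hasPerfectMatchingF_of_injective f hf hfadj
    (fun v hv => disjoint_left.mp hdisj hv (hfS₂ v)) fun x => ?_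
  rcases hcover x with hx | hx
  · exact .inl hx
  · obtain ⟨v, -, rfl⟩ := mem_image.mp (hrange ▸ hx)
    exact .inr ⟨v, rfl⟩

/-- A very well-covered graph with two disjoint maximum independent sets is
bipartite with a perfect matching. -/
theorem stmt12 (G : SimpleGraph V)
    (hiso : ∀ v : V, ∃ u : V, G.Adj v u)
    (hwc : ∀ S : Finset V, isIndep G S → (∀ v ∉ S, ¬ isIndep G (insert v S)) →
      S.card = indepNumF G)
    (hvwc : Fintype.card V = 2 * indepNumF G)
    (h : hasTwoDisjointMaxIndep G) :
    G.Colorable 2 ∧ hasPerfectMatchingF G :=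
  stmt12_general G hvwc h
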